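/- ∏_{n≥0} [((n+1)(4n+5)) / ((n+2)(4n+3))]^{(-1)^{t_n}} = 1. -/

import Mathlib

/-!
Write `ε n = (-1) ^ tm n` and `r n = (2n+3)/(2n+4)`. The `n`-th factor equals
`r n * r (2n+1) / r (2n)`, and `ε (2n) = ε n`, `ε (2n+1) = -ε n`, so the `N`-th partial product
telescopes to `G N / G (2N)` with `G N = ∏_{n<N} r n ^ ε n`. The series `∑ ε n log r n` converges
by Dirichlet's test, since `log r n` increases to `0` and the partial sums of `ε` lie in `[-1, 1]`;
hence `G N / G (2N) → 1`.
-/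

open Filter Finset Topology

/-- The Thue–Morse sequence: sum modulo 2 of the binary digits of `n`. -/
def tm (n : ℕ) : ℕ := (Nat.digits 2 n).sum % 2

section ThueMorse

variable {R : Type*} [Ring R]

lemma neg_one_pow_tm (n : ℕ) : (-1 : R) ^ tm n = (-1) ^ (Nat.digits 2 n).sum :=
  (neg_one_pow_eq_pow_mod_two _).symm

lemma neg_one_pow_tm_two_mul (n : ℕ) : (-1 : R) ^ tm (2 * n) = (-1) ^ tm n := by
  rcases n.eq_zero_or_pos with rfl | hn
  · rfl
  · rw [neg_one_pow_tm, neg_one_pow_tm, Nat.digits_def' one_lt_two (by omega)]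
    simp

lemma neg_one_pow_tm_two_mul_add_one (n : ℕ) : (-1 : R) ^ tm (2 * n + 1) = -(-1) ^ tm n := by
  rw [neg_one_pow_tm, neg_one_pow_tm, Nat.digits_def' one_lt_two (by omega),
    show (2 * n + 1) % 2 = 1 by omega, show (2 * n + 1) / 2 = n by omega, List.sum_cons,
    pow_add, pow_one, neg_one_mul]

end ThueMorse

lemma Finset.sum_range_two_mul {M : Type*} [AddCommMonoid M] (f : ℕ → M) (N : ℕ) :
    ∑ i ∈ range (2 * N), f i = ∑ i ∈ range N, (f (2 * i) + f (2 * i + 1)) := by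
  induction N with
  | zero => simp
  | succ N ih => rw [Nat.mul_succ, sum_range_succ, sum_range_succ, sum_range_succ, ih, add_assoc]

lemma norm_sum_range_neg_one_pow_tm_le (n : ℕ) : ‖∑ i ∈ range n, (-1 : ℝ) ^ tm i‖ ≤ 1 := by
  have heven (m : ℕ) : ∑ i ∈ range (2 * m), (-1 : ℝ) ^ tm i = 0 := by
    simp [sum_range_two_mul, neg_one_pow_tm_two_mul, neg_one_pow_tm_two_mul_add_one]
  obtain ⟨m, rfl | rfl⟩ := n.even_or_odd'
  · simp [heven]
  · rw [sum_range_succ, heven, zero_add, norm_pow, norm_neg, norm_one, one_pow]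

lemma Monotone.cauchySeq_thueMorse_series_of_tendsto_zero {f : ℕ → ℝ} (hf : Monotone f)
    (hf0 : Tendsto f atTop (𝓝 0)) :
    CauchySeq fun n ↦ ∑ i ∈ range n, (-1 : ℝ) ^ tm i * f i := by
  simp_rw [mul_comm]
  exact hf.cauchySeq_series_mul_of_tendsto_zero_of_bounded hf0 norm_sum_range_neg_one_pow_tm_le

lemma CauchySeq.tendsto_sub_comp_two_mul {E : Type*} [NormedAddCommGroup E] [CompleteSpace E]
    {S : ℕ → E} (hS : CauchySeq S) :
    Tendsto (fun N ↦ S N - S (2 * N)) atTop (𝓝 0) := by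
  obtain ⟨l, hl⟩ := cauchySeq_tendsto_of_complete hS
  simpa using hl.sub (hl.comp (tendsto_id.const_mul_atTop' two_pos))

lemma zpow_eq_exp_mul_log {x : ℝ} (hx : 0 < x) (k : ℤ) : x ^ k = Real.exp (k * Real.log x) := by
  rw [← Real.log_zpow, Real.exp_log (zpow_pos hx k)]

noncomputable def oddEvenRatio (n : ℕ) : ℝ := (3 + 2 * n) / (4 + 2 * n)

lemma oddEvenRatio_pos (n : ℕ) : 0 < oddEvenRatio n := by
  unfold oddEvenRatio; positivity

lemma monotone_oddEvenRatio : Monotone oddEvenRatio := by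
  refine monotone_nat_of_le_succ fun n ↦ ?_
  unfold oddEvenRatio
  rw [div_le_div_iff₀ (by positivity) (by positivity)]
  push_cast
  nlinarith

lemma tendsto_oddEvenRatio : Tendsto oddEvenRatio atTop (𝓝 1) := by
  unfold oddEvenRatio
  simpa [div_self (two_ne_zero (α := ℝ))] using
    tendsto_add_mul_div_add_mul_atTop_nhds (3 : ℝ) 4 2 two_ne_zero

lemma factor_eq_oddEvenRatio (n : ℕ) :
    ((n : ℝ) + 1) * (4 * n + 5) / ((n + 2) * (4 * n + 3))
      = oddEvenRatio n * oddEvenRatio (2 * n + 1) / oddEvenRatio (2 * n) := by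
  unfold oddEvenRatio
  push_cast
  field_simp
  ring

lemma prod_range_zpow_neg_one_pow_tm_eq_exp {r : ℕ → ℝ} (hr : ∀ n, 0 < r n) (N : ℕ) :
    ∏ n ∈ range N, (r n * r (2 * n + 1) / r (2 * n)) ^ ((-1 : ℤ) ^ tm n)
      = Real.exp (∑ n ∈ range N, (-1 : ℝ) ^ tm n * Real.log (r n)
          - ∑ n ∈ range (2 * N), (-1 : ℝ) ^ tm n * Real.log (r n)) := by
  have hterm (n : ℕ) : (r n * r (2 * n + 1) / r (2 * n)) ^ ((-1 : ℤ) ^ tm n)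
      = Real.exp ((-1 : ℝ) ^ tm n * Real.log (r n) - ((-1 : ℝ) ^ tm (2 * n) * Real.log (r (2 * n))
          + (-1 : ℝ) ^ tm (2 * n + 1) * Real.log (r (2 * n + 1)))) := by
    have hprod := mul_pos (hr n) (hr (2 * n + 1))
    rw [zpow_eq_exp_mul_log (div_pos hprod (hr _)), Real.log_div hprod.ne' (hr _).ne',
      Real.log_mul (hr _).ne' (hr _).ne', neg_one_pow_tm_two_mul, neg_one_pow_tm_two_mul_add_one]
    push_cast
    congr 1
    ring
  simp only [hterm, ← Real.exp_sum, sum_sub_distrib, sum_range_two_mul]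

theorem prod_f :
    Tendsto (fun N => ∏ n ∈ Finset.range N,
        (((((n : ℝ) + 1) * (4 * (n : ℝ) + 5)) / (((n : ℝ) + 2) * (4 * (n : ℝ) + 3)))) ^ ((-1 : ℤ) ^ tm n))
      atTop (𝓝 ((1 : ℝ))) := by
  have hlog : Monotone fun n ↦ Real.log (oddEvenRatio n) := fun m n hmn ↦
    Real.log_le_log (oddEvenRatio_pos m) (monotone_oddEvenRatio hmn)
  have hlog0 : Tendsto (fun n ↦ Real.log (oddEvenRatio n)) atTop (𝓝 0) := by
    simpa using tendsto_oddEvenRatio.log one_ne_zero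
  have hS := (hlog.cauchySeq_thueMorse_series_of_tendsto_zero hlog0).tendsto_sub_comp_two_mul
  simp_rw [factor_eq_oddEvenRatio, prod_range_zpow_neg_one_pow_tm_eq_exp oddEvenRatio_pos]
  simpa using hS.rexp
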